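/- In the polynomial ring ℚ[a₁,a₂,b₁,b₂,b₃], write A₁ = a₁+a₂, A₂ = a₁a₂ (the elementary symmetric polynomials in a₁,a₂) and B₁ = b₁+b₂+b₃, B₂ = b₁b₂+b₁b₃+b₂b₃ (elementary symmetric polynomials in b₁,b₂,b₃). Let φ₀ : ℚ[a₁,a₂,b₁,b₂,b₃] → ℚ[t₁,t₂,b₃] be the ring homomorphism determined by a₁ ↦ t₁, a₂ ↦ t₂, b₁ ↦ t₁, b₂ ↦ t₂, b₃ ↦ b₃, and let φ₁ : ℚ[a₁,a₂,b₁,b₂,b₃] → ℚ[t₁,a₂,b₂,b₃] be the ring homomorphism determined by a₁ ↦ t₁, a₂ ↦ a₂, b₁ ↦ t₁, b₂ ↦ b₂, b₃ ↦ b₃. Then P = A₁² − A₂ + B₂ − A₁B₁ is the unique polynomial that is homogeneous of degree 2, invariant under all permutations of the variables a₁,a₂ and under all permutations of the variables b₁,b₂,b₃, and satisfies φ₀(P) = 0 and φ₁(P) = (b₂−a₂)(b₃−a₂). -/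

import Mathlib

open MvPolynomial

/- Variables of `ℚ[a₁,a₂,b₁,b₂,b₃]` are indexed by `Fin 5`:
`0 ↦ a₁`, `1 ↦ a₂`, `2 ↦ b₁`, `3 ↦ b₂`, `4 ↦ b₃`. -/

/-- `P = A₁² − A₂ + B₂ − A₁B₁`, where `A₁ = a₁+a₂`, `A₂ = a₁a₂`,
`B₁ = b₁+b₂+b₃`, `B₂ = b₁b₂+b₁b₃+b₂b₃`. -/
noncomputable def fundClassP : MvPolynomial (Fin 5) ℚ :=
  (X 0 + X 1) ^ 2 - X 0 * X 1 + (X 2 * X 3 + X 2 * X 4 + X 3 * X 4)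
    - (X 0 + X 1) * (X 2 + X 3 + X 4)

/-- `φ₀ : ℚ[a₁,a₂,b₁,b₂,b₃] → ℚ[t₁,t₂,b₃]` determined by
`a₁ ↦ t₁, a₂ ↦ t₂, b₁ ↦ t₁, b₂ ↦ t₂, b₃ ↦ b₃`, where the target variables are
`0 ↦ t₁`, `1 ↦ t₂`, `2 ↦ b₃`. -/
noncomputable def fundClassφ₀ : MvPolynomial (Fin 5) ℚ →+* MvPolynomial (Fin 3) ℚ :=
  (aeval ![X 0, X 1, X 0, X 1, X 2]).toRingHom

/-- `φ₁ : ℚ[a₁,a₂,b₁,b₂,b₃] → ℚ[t₁,a₂,b₂,b₃]` determined by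
`a₁ ↦ t₁, a₂ ↦ a₂, b₁ ↦ t₁, b₂ ↦ b₂, b₃ ↦ b₃`, where the target variables are
`0 ↦ t₁`, `1 ↦ a₂`, `2 ↦ b₂`, `3 ↦ b₃`. -/
noncomputable def fundClassφ₁ : MvPolynomial (Fin 5) ℚ →+* MvPolynomial (Fin 4) ℚ :=
  (aeval ![X 0, X 1, X 0, X 2, X 3]).toRingHom

/-- The conditions on a polynomial `Q ∈ ℚ[a₁,a₂,b₁,b₂,b₃]`: homogeneous of degree 2,
invariant under all permutations of the variables `a₁,a₂` and under all permutations of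
the variables `b₁,b₂,b₃` (i.e. under every permutation of the five variables preserving
the set `{a₁,a₂}`, and hence also `{b₁,b₂,b₃}`), with `φ₀ Q = 0` and
`φ₁ Q = (b₂ − a₂)(b₃ − a₂)`. -/
def FundClassConds (Q : MvPolynomial (Fin 5) ℚ) : Prop :=
  Q.IsHomogeneous 2 ∧
  (∀ σ : Equiv.Perm (Fin 5), (∀ i : Fin 5, (i : ℕ) < 2 ↔ ((σ i : ℕ) < 2)) →
      rename σ Q = Q) ∧
  fundClassφ₀ Q = 0 ∧
  fundClassφ₁ Q = (X 2 - X 1) * (X 3 - X 1)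


set_option maxHeartbeats 1000000

open Finsupp in
private lemma fc_pair_eq {k l m n : Fin 5} :
    ((single k 1 + single l 1 : Fin 5 →₀ ℕ) = single m 1 + single n 1) ↔
      ((k = m ∧ l = n) ∨ (k = n ∧ l = m)) := by
  rw [Finsupp.single_add_single_eq_single_add_single one_ne_zero one_ne_zero]
  simp

open Finsupp in
private lemma fc_coeff_C_XX (r : ℚ) (i j k l : Fin 5) :
    coeff (single k 1 + single l 1) (C r * (X i * X j) : MvPolynomial (Fin 5) ℚ) =
      if (i = k ∧ j = l) ∨ (i = l ∧ j = k) then r else 0 := by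
  have h : (C r * (X i * X j) : MvPolynomial (Fin 5) ℚ) =
      monomial (single i 1 + single j 1) r := by
    rw [show (X i : MvPolynomial (Fin 5) ℚ) = monomial (single i 1) 1 from rfl,
      show (X j : MvPolynomial (Fin 5) ℚ) = monomial (single j 1) 1 from rfl,
      monomial_mul, C_mul_monomial]
    norm_num
  rw [h, coeff_monomial]
  simp only [fc_pair_eq]

private lemma fc_deg5 (d : Fin 5 →₀ ℕ) : d.degree = d 0 + d 1 + d 2 + d 3 + d 4 := by
  rw [Finsupp.degree_apply,
    Finset.sum_subset (Finset.subset_univ _) (fun x _ hx => Finsupp.notMem_support_iff.mp hx),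
    Fin.sum_univ_five]

open Finsupp in
private lemma fc_sum_one (d : Fin 5 →₀ ℕ) (h : d 0 + d 1 + d 2 + d 3 + d 4 = 1) :
    ∃ i, d = single i 1 := by
  have h5 : d 0 = 1 ∨ d 1 = 1 ∨ d 2 = 1 ∨ d 3 = 1 ∨ d 4 = 1 := by omega
  rcases h5 with h5 | h5 | h5 | h5 | h5
  · exact ⟨0, by ext m; fin_cases m <;> simp [Finsupp.single_apply] <;> omega⟩
  · exact ⟨1, by ext m; fin_cases m <;> simp [Finsupp.single_apply] <;> omega⟩
  · exact ⟨2, by ext m; fin_cases m <;> simp [Finsupp.single_apply] <;> omega⟩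
  · exact ⟨3, by ext m; fin_cases m <;> simp [Finsupp.single_apply] <;> omega⟩
  · exact ⟨4, by ext m; fin_cases m <;> simp [Finsupp.single_apply] <;> omega⟩

open Finsupp in
private lemma fc_sum_two (d : Fin 5 →₀ ℕ) (h : d 0 + d 1 + d 2 + d 3 + d 4 = 2) :
    ∃ i j, d = single i 1 + single j 1 := by
  have h5 : 1 ≤ d 0 ∨ 1 ≤ d 1 ∨ 1 ≤ d 2 ∨ 1 ≤ d 3 ∨ 1 ≤ d 4 := by omega
  have key : ∀ i : Fin 5, 1 ≤ d i → ∃ j k, d = single j 1 + single k 1 := by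
    intro i hi
    set d' : Fin 5 →₀ ℕ := d - single i 1 with hd'
    have happ : ∀ m : Fin 5, d' m = d m - single i 1 m := fun m => Finsupp.tsub_apply d _ m
    have hsum : d' 0 + d' 1 + d' 2 + d' 3 + d' 4 = 1 := by
      fin_cases i <;> simp [happ, Finsupp.single_apply] at * <;> omega
    obtain ⟨j, hj⟩ := fc_sum_one d' hsum
    refine ⟨i, j, ?_⟩
    have : d = single i 1 + d' := by
      ext m
      rw [Finsupp.add_apply, happ]
      have := happ m
      fin_cases i <;> fin_cases m <;> simp_all [Finsupp.single_apply]
    rw [this, hj]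
  rcases h5 with h5 | h5 | h5 | h5 | h5
  exacts [key 0 h5, key 1 h5, key 2 h5, key 3 h5, key 4 h5]

open Finsupp in
private noncomputable def fcC (D : MvPolynomial (Fin 5) ℚ) (i j : Fin 5) : ℚ :=
  coeff (single i 1 + single j 1) D

private noncomputable def fcE (D : MvPolynomial (Fin 5) ℚ) : MvPolynomial (Fin 5) ℚ :=
  C (fcC D 0 0) * (X 0 * X 0) + C (fcC D 0 1) * (X 0 * X 1) + C (fcC D 0 2) * (X 0 * X 2) +
  C (fcC D 0 3) * (X 0 * X 3) + C (fcC D 0 4) * (X 0 * X 4) + C (fcC D 1 1) * (X 1 * X 1) +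
  C (fcC D 1 2) * (X 1 * X 2) + C (fcC D 1 3) * (X 1 * X 3) + C (fcC D 1 4) * (X 1 * X 4) +
  C (fcC D 2 2) * (X 2 * X 2) + C (fcC D 2 3) * (X 2 * X 3) + C (fcC D 2 4) * (X 2 * X 4) +
  C (fcC D 3 3) * (X 3 * X 3) + C (fcC D 3 4) * (X 3 * X 4) + C (fcC D 4 4) * (X 4 * X 4)

open Finsupp in
private lemma fc_coeff_E (D : MvPolynomial (Fin 5) ℚ) (i j : Fin 5) :
    coeff (single i 1 + single j 1) (fcE D) = fcC D i j := by
  fin_cases i <;> fin_cases j <;>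
    (simp only [fcE, coeff_add, fc_coeff_C_XX]
     simp (config := { decide := true }) [fcC]
     try rw [add_comm (single _ _)])

private lemma fc_homog_E (D : MvPolynomial (Fin 5) ℚ) : (fcE D).IsHomogeneous 2 := by
  have h : ∀ (r : ℚ) (i j : Fin 5),
      (C r * (X i * X j) : MvPolynomial (Fin 5) ℚ).IsHomogeneous 2 := by
    intro r i j
    have := (isHomogeneous_C (Fin 5) r).mul ((isHomogeneous_X ℚ i).mul (isHomogeneous_X ℚ j))
    simpa using this
  unfold fcE
  repeat' apply MvPolynomial.IsHomogeneous.add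
  all_goals apply h

open Finsupp in
private lemma fc_unique_aux (D : MvPolynomial (Fin 5) ℚ)
    (hH : D.IsHomogeneous 2)
    (hsym : ∀ σ : Equiv.Perm (Fin 5), (∀ i : Fin 5, (i : ℕ) < 2 ↔ ((σ i : ℕ) < 2)) →
      rename σ D = D)
    (hφ1 : fundClassφ₁ D = 0) : D = 0 := by
  have hDE : D = fcE D := by
    ext d
    by_cases hdeg : d.degree = 2
    · obtain ⟨i, j, rfl⟩ := fc_sum_two d (by rw [← fc_deg5]; exact hdeg)
      rw [fc_coeff_E]
      rfl
    · rw [hH.coeff_eq_zero hdeg, (fc_homog_E D).coeff_eq_zero hdeg]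
  have hswap : ∀ σ : Equiv.Perm (Fin 5), rename σ D = D →
      ∀ i j : Fin 5, fcC D (σ i) (σ j) = fcC D i j := by
    intro σ hσ i j
    have h2 := coeff_rename_mapDomain σ σ.injective D (single i 1 + single j 1)
    rwa [hσ, Finsupp.mapDomain_add, Finsupp.mapDomain_single, Finsupp.mapDomain_single] at h2
  have e01 := hswap _ (hsym (Equiv.swap 0 1) (by decide))
  have e23 := hswap _ (hsym (Equiv.swap 2 3) (by decide))
  have e24 := hswap _ (hsym (Equiv.swap 2 4) (by decide))
  have e34 := hswap _ (hsym (Equiv.swap 3 4) (by decide))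
  have hφE : fundClassφ₁ (fcE D) = 0 := by rw [← hDE]; exact hφ1
  rw [show fundClassφ₁ (fcE D) =
      (C (fcC D 0 0) * (X 0 * X 0) + C (fcC D 0 1) * (X 0 * X 1) + C (fcC D 0 2) * (X 0 * X 0) +
       C (fcC D 0 3) * (X 0 * X 2) + C (fcC D 0 4) * (X 0 * X 3) + C (fcC D 1 1) * (X 1 * X 1) +
       C (fcC D 1 2) * (X 1 * X 0) + C (fcC D 1 3) * (X 1 * X 2) + C (fcC D 1 4) * (X 1 * X 3) +
       C (fcC D 2 2) * (X 0 * X 0) + C (fcC D 2 3) * (X 0 * X 2) + C (fcC D 2 4) * (X 0 * X 3) +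
       C (fcC D 3 3) * (X 2 * X 2) + C (fcC D 3 4) * (X 2 * X 3) + C (fcC D 4 4) * (X 3 * X 3) :
        MvPolynomial (Fin 4) ℚ) by
    simp [fundClassφ₁, fcE, algebraMap_eq]] at hφE
  have ev : ∀ x : Fin 4 → ℚ, (eval x)
      (C (fcC D 0 0) * (X 0 * X 0) + C (fcC D 0 1) * (X 0 * X 1) + C (fcC D 0 2) * (X 0 * X 0) +
       C (fcC D 0 3) * (X 0 * X 2) + C (fcC D 0 4) * (X 0 * X 3) + C (fcC D 1 1) * (X 1 * X 1) +
       C (fcC D 1 2) * (X 1 * X 0) + C (fcC D 1 3) * (X 1 * X 2) + C (fcC D 1 4) * (X 1 * X 3) +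
       C (fcC D 2 2) * (X 0 * X 0) + C (fcC D 2 3) * (X 0 * X 2) + C (fcC D 2 4) * (X 0 * X 3) +
       C (fcC D 3 3) * (X 2 * X 2) + C (fcC D 3 4) * (X 2 * X 3) + C (fcC D 4 4) * (X 3 * X 3) :
        MvPolynomial (Fin 4) ℚ) = 0 := fun x => by rw [hφE]; simp
  have q11 := ev ![0,1,0,0]
  have q33 := ev ![0,0,1,0]
  have q44 := ev ![0,0,0,1]
  have q13 := ev ![0,1,1,0]
  have q14 := ev ![0,1,0,1]
  have q34 := ev ![0,0,1,1]
  have q02 := ev ![1,0,0,0]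
  have q01 := ev ![1,1,0,0]
  simp at q11 q33 q44 q13 q14 q34 q02 q01
  have scomm : ∀ i j : Fin 5, fcC D i j = fcC D j i := by
    intro i j; rw [fcC, fcC, add_comm]
  have s00 : fcC D 0 0 = fcC D 1 1 := by simpa using e01 1 1
  have s22 : fcC D 2 2 = fcC D 3 3 := by simpa using e23 3 3
  have s12 : fcC D 1 2 = fcC D 1 3 := by simpa [Equiv.swap_apply_def] using e23 1 3
  have s02 : fcC D 0 2 = fcC D 1 2 := by simpa [Equiv.swap_apply_def] using e01 1 2
  have s03 : fcC D 0 3 = fcC D 1 3 := by simpa [Equiv.swap_apply_def] using e01 1 3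
  have s04 : fcC D 0 4 = fcC D 1 4 := by simpa [Equiv.swap_apply_def] using e01 1 4
  have s23 : fcC D 2 3 = fcC D 4 3 := by simpa [Equiv.swap_apply_def] using e24 4 3
  have s24 : fcC D 2 4 = fcC D 2 3 := by simpa [Equiv.swap_apply_def] using e34 2 3
  have h11 : fcC D 1 1 = 0 := q11
  have h00 : fcC D 0 0 = 0 := by rw [s00]; exact q11
  have h22 : fcC D 2 2 = 0 := by rw [s22]; exact q33
  have h13 : fcC D 1 3 = 0 := by linarith
  have h14 : fcC D 1 4 = 0 := by linarith
  have h34 : fcC D 3 4 = 0 := by linarith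
  have h12 : fcC D 1 2 = 0 := by rw [s12]; exact h13
  have h02 : fcC D 0 2 = 0 := by rw [s02]; exact h12
  have h03 : fcC D 0 3 = 0 := by rw [s03]; exact h13
  have h04 : fcC D 0 4 = 0 := by rw [s04]; exact h14
  have h23 : fcC D 2 3 = 0 := by rw [s23, scomm]; exact h34
  have h24 : fcC D 2 4 = 0 := by rw [s24]; exact h23
  have h01 : fcC D 0 1 = 0 := by linarith
  rw [hDE]
  simp [fcE, h00, h01, h02, h03, h04, h11, h12, h13, h14, h22, h23, h24, q33, h34, q44]

private lemma fc_aux_lt2 : ∀ x : Fin 5, (x : ℕ) < 2 → x = 0 ∨ x = 1 := by decide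
private lemma fc_aux_ge2 : ∀ x : Fin 5, ¬ (x : ℕ) < 2 → x = 2 ∨ x = 3 ∨ x = 4 := by decide

private lemma fc_conds_P : FundClassConds fundClassP := by
  refine ⟨?_, ?_, ?_, ?_⟩
  · have hX : ∀ i : Fin 5, (X i : MvPolynomial (Fin 5) ℚ).IsHomogeneous 1 :=
      fun i => isHomogeneous_X _ _
    have h1 : ∀ i j : Fin 5, ((X i * X j : MvPolynomial (Fin 5) ℚ)).IsHomogeneous 2 :=
      fun i j => (hX i).mul (hX j)
    unfold fundClassP
    apply MvPolynomial.IsHomogeneous.sub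
    · apply MvPolynomial.IsHomogeneous.add
      · apply MvPolynomial.IsHomogeneous.sub
        · exact ((hX 0).add (hX 1)).pow 2
        · exact h1 0 1
      · exact ((h1 2 3).add (h1 2 4)).add (h1 3 4)
    · exact ((hX 0).add (hX 1)).mul (((hX 2).add (hX 3)).add (hX 4))
  · intro σ h
    have hinj := σ.injective
    have h0 := fc_aux_lt2 (σ 0) ((h 0).mp (by norm_num))
    have h1 := fc_aux_lt2 (σ 1) ((h 1).mp (by norm_num))
    have h2 := fc_aux_ge2 (σ 2) (fun hc => by have := (h 2).mpr hc; omega)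
    have h3 := fc_aux_ge2 (σ 3) (fun hc => by have := (h 3).mpr hc; omega)
    have h4 := fc_aux_ge2 (σ 4) (fun hc => by have := (h 4).mpr hc; omega)
    simp only [fundClassP, map_sub, map_add, map_mul, map_pow, rename_X]
    rcases h0 with h0 | h0 <;> rcases h1 with h1 | h1 <;>
      rcases h2 with h2 | h2 | h2 <;> rcases h3 with h3 | h3 | h3 <;>
      rcases h4 with h4 | h4 | h4 <;>
    first
    | (exact absurd (hinj (h0.trans h1.symm)) (by decide))
    | (exact absurd (hinj (h2.trans h3.symm)) (by decide))
    | (exact absurd (hinj (h2.trans h4.symm)) (by decide))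
    | (exact absurd (hinj (h3.trans h4.symm)) (by decide))
    | (rw [h0, h1, h2, h3, h4]; try ring)
  · simp only [fundClassφ₀, fundClassP, AlgHom.toRingHom_eq_coe, RingHom.coe_coe, map_sub,
      map_add, map_mul, map_pow, aeval_X, Matrix.cons_val_zero, Matrix.cons_val_one,
      Matrix.head_cons, Matrix.cons_val_two, Matrix.tail_cons, Matrix.cons_val_three,
      Matrix.cons_val_four]
    ring
  · simp only [fundClassφ₁, fundClassP, AlgHom.toRingHom_eq_coe, RingHom.coe_coe, map_sub,
      map_add, map_mul, map_pow, aeval_X, Matrix.cons_val_zero, Matrix.cons_val_one,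
      Matrix.head_cons, Matrix.cons_val_two, Matrix.tail_cons, Matrix.cons_val_three,
      Matrix.cons_val_four]
    ring

/-- `P = A₁² − A₂ + B₂ − A₁B₁` is the unique polynomial which is homogeneous of degree 2,
symmetric separately in the `a` and in the `b` variables, and satisfies `φ₀(P) = 0` and
`φ₁(P) = (b₂−a₂)(b₃−a₂)`. -/
theorem fundamental_class_interpolation_unique :
    FundClassConds fundClassP ∧
      ∀ Q : MvPolynomial (Fin 5) ℚ, FundClassConds Q → Q = fundClassP := by
  refine ⟨fc_conds_P, fun Q hQ => ?_⟩
  obtain ⟨hQh, hQs, hQ0, hQ1⟩ := hQ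
  obtain ⟨hPh, hPs, hP0, hP1⟩ := fc_conds_P
  have hD := fc_unique_aux (Q - fundClassP) (hQh.sub hPh)
    (fun σ hσ => by rw [map_sub, hQs σ hσ, hPs σ hσ])
    (by rw [map_sub, hQ1, hP1, sub_self])
  exact sub_eq_zero.mp hD
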